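/- arXiv:1112.0749 — 3 statements merged into one kernel-verified Lean document; each statement's English description precedes it below -/
import Mathlib

section
/- Let U ⊆ ℚ^n be such that for every choice of signs σ₁,…,σ_n ∈ {−1,1} there exists u = (u₁,…,u_n) ∈ U with sgn(u_j) = σ_j for each j (in particular u_j ≠ 0). Then 0 lies in the rational convex hull of U. -/
/-!
Induct on the set `s` of coordinates on which every sign pattern is realized by a point of a
convex set vanishing off `s`. To drop a coordinate `i`, take the points realizing a pattern with
the two opposite signs at `i`: the point of the segment between them where coordinate `i`
vanishes keeps the common signs of the other coordinates. Once `s` is empty, the realizing point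
is `0`.
-/

variable {𝕜 ι : Type*}

lemma exists_pos_combination_eq_zero [Field 𝕜] [LinearOrder 𝕜] [IsStrictOrderedRing 𝕜]
    {x y : 𝕜} (hx : 0 < x) (hy : y < 0) :
    ∃ a b : 𝕜, 0 < a ∧ 0 < b ∧ a + b = 1 ∧ a * x + b * y = 0 := by
  have hd : 0 < x - y := by linarith
  refine ⟨-y / (x - y), x / (x - y), div_pos (neg_pos.2 hy) hd, div_pos hx hd, ?_, ?_⟩
  · field_simp
    ring
  · field_simp
    ring

def RealizesSignsOn [Ring 𝕜] [LT 𝕜] (s : Finset ι) (V : Set (ι → 𝕜)) : Prop :=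
  ∀ σ : ι → 𝕜, (∀ j, σ j = 1 ∨ σ j = -1) →
    ∃ v ∈ V, (∀ j ∈ s, 0 < σ j * v j) ∧ ∀ j ∉ s, v j = 0

namespace RealizesSignsOn

variable {s : Finset ι}

section Ring

variable [Ring 𝕜] [LT 𝕜] {V W : Set (ι → 𝕜)}

lemma mono (h : RealizesSignsOn s V) (hVW : V ⊆ W) : RealizesSignsOn s W := fun σ hσ =>
  let ⟨v, hv, hs⟩ := h σ hσ
  ⟨v, hVW hv, hs⟩

lemma zero_mem (h : RealizesSignsOn (∅ : Finset ι) V) : (0 : ι → 𝕜) ∈ V := by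
  obtain ⟨v, hv, -, hzero⟩ := h 1 fun _ => Or.inl rfl
  rwa [show v = 0 from funext fun j => hzero j (Finset.notMem_empty j)] at hv

end Ring

lemma of_insert [Field 𝕜] [LinearOrder 𝕜] [IsStrictOrderedRing 𝕜] [DecidableEq ι]
    {C : Set (ι → 𝕜)} {i : ι} (hi : i ∉ s) (hC : Convex 𝕜 C)
    (h : RealizesSignsOn (insert i s) C) : RealizesSignsOn s C := by
  intro σ hσ
  have hσ' (t : 𝕜) (ht : t = 1 ∨ t = -1) (j : ι) :
      Function.update σ i t j = 1 ∨ Function.update σ i t j = -1 :=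
    (Function.forall_update_iff σ fun _ y => y = 1 ∨ y = -1).2 ⟨ht, fun j _ => hσ j⟩ j
  obtain ⟨u, huC, hu, hu0⟩ := h _ (hσ' 1 (Or.inl rfl))
  obtain ⟨w, hwC, hw, hw0⟩ := h _ (hσ' (-1) (Or.inr rfl))
  have hui : 0 < u i := by simpa using hu i (s.mem_insert_self i)
  have hwi : w i < 0 := by simpa using hw i (s.mem_insert_self i)
  obtain ⟨a, b, ha, hb, hab, hi0⟩ := exists_pos_combination_eq_zero hui hwi
  refine ⟨a • u + b • w, hC huC hwC ha.le hb.le hab, fun j hj => ?_, fun j hj => ?_⟩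
  · have hji : j ≠ i := ne_of_mem_of_not_mem hj hi
    have huj := hu j (Finset.mem_insert_of_mem hj)
    have hwj := hw j (Finset.mem_insert_of_mem hj)
    rw [Function.update_of_ne hji] at huj hwj
    calc 0 < a * (σ j * u j) + b * (σ j * w j) := by positivity
      _ = σ j * (a • u + b • w) j := by
        simp only [Pi.add_apply, Pi.smul_apply, smul_eq_mul]
        ring
  · rcases eq_or_ne j i with rfl | hji
    · simpa using hi0
    · have hj' : j ∉ insert i s := by simp [hji, hj]
      simp [hu0 j hj', hw0 j hj']

lemma zero_mem_of_convex [Field 𝕜] [LinearOrder 𝕜] [IsStrictOrderedRing 𝕜]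
    {C : Set (ι → 𝕜)} (hC : Convex 𝕜 C) (h : RealizesSignsOn s C) : (0 : ι → 𝕜) ∈ C := by
  classical
  induction s using Finset.induction_on with
  | empty => exact h.zero_mem
  | insert i s hi ih => exact ih (h.of_insert hi hC)

end RealizesSignsOn

theorem stmt10
    (n : ℕ) (U : Set (Fin n → ℚ))
    (h : ∀ σ : Fin n → ℚ, (∀ j, σ j = 1 ∨ σ j = -1) →
      ∃ u ∈ U, ∀ j : Fin n, 0 < σ j * u j) :
    (0 : Fin n → ℚ) ∈ convexHull ℚ U := by
  have hU : RealizesSignsOn Finset.univ U := fun σ hσ =>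
    let ⟨u, hu, hpos⟩ := h σ hσ
    ⟨u, hu, fun j _ => hpos j, fun j hj => absurd (Finset.mem_univ j) hj⟩
  exact (hU.mono (subset_convexHull ℚ U)).zero_mem_of_convex (convex_convexHull ℚ U)
end

section
/- Let Λ ⊆ [0,∞) be an additive semigroup with 0 ∈ Λ, let ψ : Λ → ℂ be a bounded character of Λ, and let Γ ⊆ Λ be a finite subset. Set Γ₀ = {γ ∈ Γ : ψ(γ) = 0} and Γ' = {γ ∈ Γ : ψ(γ) ≠ 0}, and let V' = Span_ℚ(Γ'). Then conv_ℚ(Γ₀) ∩ V' = ∅, i.e. no rational convex combination of elements of Γ₀ lies in the rational span of Γ'. -/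
/-!
Clearing denominators, a point of `conv_ℚ(Γ₀) ∩ Span_ℚ(Γ')` has a positive integer multiple `y`
which is a nonempty sum of elements of `Γ₀` and also a difference `p - q` of sums of elements
of `Γ'`. Multiplicativity then gives `0 = ψ y * ψ q = ψ p ≠ 0`.
-/

theorem AddSubsemigroup.nsmul_mem {A : Type*} [AddMonoid A] (C : AddSubsemigroup A) {x : A}
    (hx : x ∈ C) {n : ℕ} (hn : 0 < n) : n • x ∈ C := by
  induction n, hn using Nat.le_induction with
  | base => rwa [one_nsmul]
  | succ n _ ih => rw [succ_nsmul]; exact C.add_mem ih hx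

theorem AddSubgroup.exists_sub_eq_of_mem_closure {G : Type*} [AddCommGroup G] {s : Set G} {x : G}
    (hx : x ∈ AddSubgroup.closure s) :
    ∃ p ∈ AddSubmonoid.closure s, ∃ q ∈ AddSubmonoid.closure s, p - q = x := by
  induction hx using AddSubgroup.closure_induction with
  | mem x hx => exact ⟨x, AddSubmonoid.subset_closure hx, 0, zero_mem _, sub_zero x⟩
  | zero => exact ⟨0, zero_mem _, 0, zero_mem _, sub_self 0⟩
  | add x y _ _ hx hy =>
    obtain ⟨p, hp, q, hq, rfl⟩ := hx
    obtain ⟨p', hp', q', hq', rfl⟩ := hy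
    exact ⟨p + p', add_mem hp hp', q + q', add_mem hq hq', by abel⟩
  | neg x _ hx =>
    obtain ⟨p, hp, q, hq, rfl⟩ := hx
    exact ⟨q, hq, p, hp, (neg_sub p q).symm⟩

theorem Rat.den_nsmul_smul {V : Type*} [AddCommGroup V] [Module ℚ V] (q : ℚ) (x : V) :
    q.den • q • x = q.num • x := by
  rw [← Nat.cast_smul_eq_nsmul ℚ, smul_smul, Rat.den_mul_eq_num, Int.cast_smul_eq_zsmul]

section RationalClosures

variable {V : Type*} [AddCommGroup V] [Module ℚ V] {s : Set V} {x : V}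

theorem exists_nsmul_mem_addSubgroupClosure_of_mem_span_rat (hx : x ∈ Submodule.span ℚ s) :
    ∃ n : ℕ, 0 < n ∧ n • x ∈ AddSubgroup.closure s := by
  induction hx using Submodule.span_induction with
  | mem x hx => exact ⟨1, one_pos, by rw [one_nsmul]; exact AddSubgroup.subset_closure hx⟩
  | zero => exact ⟨1, one_pos, by rw [smul_zero]; exact zero_mem _⟩
  | add x y _ _ hx hy =>
    obtain ⟨n, hn, hnx⟩ := hx
    obtain ⟨m, hm, hmy⟩ := hy
    refine ⟨n * m, Nat.mul_pos hn hm, ?_⟩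
    rw [smul_add, mul_nsmul, mul_nsmul']
    exact add_mem (nsmul_mem hnx m) (nsmul_mem hmy n)
  | smul q x _ hx =>
    obtain ⟨n, hn, hnx⟩ := hx
    refine ⟨q.den * n, Nat.mul_pos q.den_pos hn, ?_⟩
    rw [mul_nsmul', smul_comm, Rat.den_nsmul_smul, smul_comm]
    exact zsmul_mem hnx q.num

theorem exists_nsmul_mem_addSubsemigroupClosure_of_mem_convexHull_rat
    (hx : x ∈ convexHull ℚ s) : ∃ n : ℕ, 0 < n ∧ n • x ∈ AddSubsemigroup.closure s := by
  set C := AddSubsemigroup.closure s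
  have pos_smul : ∀ {y : V} {q : ℚ}, 0 < q → (∃ n : ℕ, 0 < n ∧ n • y ∈ C) →
      ∃ n : ℕ, 0 < n ∧ n • q • y ∈ C := by
    rintro y q hq ⟨n, hn, hny⟩
    refine ⟨q.den * n, Nat.mul_pos q.den_pos hn, ?_⟩
    have hnum : q.num = q.num.toNat := (Int.toNat_of_nonneg (Rat.num_pos.mpr hq).le).symm
    rw [mul_nsmul', smul_comm, Rat.den_nsmul_smul, smul_comm, hnum, natCast_zsmul]
    exact C.nsmul_mem hny (Int.lt_toNat.mpr (Rat.num_pos.mpr hq))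
  refine convexHull_min (t := {y | ∃ n : ℕ, 0 < n ∧ n • y ∈ C})
    (fun y hy => ⟨1, one_pos, ?_⟩) ?_ hx
  · rw [one_nsmul]; exact AddSubsemigroup.subset_closure hy
  · rw [convex_iff_forall_pos]
    intro y hy z hz a b ha hb _
    obtain ⟨n, hn, hny⟩ := pos_smul ha hy
    obtain ⟨m, hm, hmz⟩ := pos_smul hb hz
    refine ⟨n * m, Nat.mul_pos hn hm, ?_⟩
    rw [smul_add, mul_nsmul, mul_nsmul']
    exact C.add_mem (C.nsmul_mem hny hm) (C.nsmul_mem hmz hn)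

theorem convexHull_rat_inter_span_rat_eq_empty {t : Set V}
    (h : Disjoint (AddSubsemigroup.closure s : Set V) (AddSubgroup.closure t)) :
    convexHull ℚ s ∩ Submodule.span ℚ t = ∅ := by
  refine Set.eq_empty_of_forall_notMem fun x ⟨hxs, hxt⟩ => ?_
  obtain ⟨n, hn, hnx⟩ := exists_nsmul_mem_addSubsemigroupClosure_of_mem_convexHull_rat hxs
  obtain ⟨m, hm, hmx⟩ := exists_nsmul_mem_addSubgroupClosure_of_mem_span_rat hxt
  refine h.ne_of_mem ((AddSubsemigroup.closure s).nsmul_mem hnx hm) (nsmul_mem hmx n) ?_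
  rw [← mul_nsmul, ← mul_nsmul']

end RationalClosures

section Character

variable {V R : Type*} [MonoidWithZero R] {ψ : V → R} {s : Set V}

theorem eq_zero_of_mem_addSubsemigroupClosure [AddCommMonoid V] {M : AddSubmonoid V} {x : V}
    (hψ : ∀ x ∈ M, ∀ y ∈ M, ψ (x + y) = ψ x * ψ y) (hsM : s ⊆ M) (hs : ∀ x ∈ s, ψ x = 0)
    (hx : x ∈ AddSubsemigroup.closure s) : ψ x = 0 := by
  have hle : AddSubsemigroup.closure s ≤ M.toAddSubsemigroup :=
    AddSubsemigroup.closure_le.mpr hsM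
  induction hx using AddSubsemigroup.closure_induction with
  | mem x hx => exact hs x hx
  | add x y hx hy _ hy0 => rw [hψ x (hle hx) y (hle hy), hy0, mul_zero]

theorem ne_zero_of_mem_addSubmonoidClosure [AddCommMonoid V] [NoZeroDivisors R]
    {M : AddSubmonoid V} {x : V} (hψ0 : ψ 0 ≠ 0)
    (hψ : ∀ x ∈ M, ∀ y ∈ M, ψ (x + y) = ψ x * ψ y) (hsM : s ⊆ M) (hs : ∀ x ∈ s, ψ x ≠ 0)
    (hx : x ∈ AddSubmonoid.closure s) : ψ x ≠ 0 := by
  have hle : AddSubmonoid.closure s ≤ M := AddSubmonoid.closure_le.mpr hsM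
  induction hx using AddSubmonoid.closure_induction with
  | mem x hx => exact hs x hx
  | zero => exact hψ0
  | add x y hx hy hx0 hy0 => rw [hψ x (hle hx) y (hle hy)]; exact mul_ne_zero hx0 hy0

theorem disjoint_addSubsemigroupClosure_addSubgroupClosure [AddCommGroup V] [NoZeroDivisors R]
    {M : AddSubmonoid V} (hψ0 : ψ 0 ≠ 0) (hψ : ∀ x ∈ M, ∀ y ∈ M, ψ (x + y) = ψ x * ψ y) {t : Set V}
    (hsM : s ⊆ M) (htM : t ⊆ M) (hs : ∀ x ∈ s, ψ x = 0) (ht : ∀ x ∈ t, ψ x ≠ 0) :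
    Disjoint (AddSubsemigroup.closure s : Set V) (AddSubgroup.closure t) := by
  refine Set.disjoint_left.mpr fun y hys hyt => ?_
  obtain ⟨p, hp, q, hq, rfl⟩ := AddSubgroup.exists_sub_eq_of_mem_closure hyt
  have hpq : p - q ∈ M := AddSubsemigroup.closure_le.mpr hsM hys
  have hqM : q ∈ M := AddSubmonoid.closure_le.mpr htM hq
  apply ne_zero_of_mem_addSubmonoidClosure hψ0 hψ htM ht hp
  rw [← sub_add_cancel p q, hψ _ hpq _ hqM, eq_zero_of_mem_addSubsemigroupClosure hψ hsM hs hys,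
    zero_mul]

end Character

theorem stmt11_general
    (Λ : Set ℝ) (hΛ0 : (0:ℝ) ∈ Λ)
    (hΛadd : ∀ x ∈ Λ, ∀ y ∈ Λ, x + y ∈ Λ)
    (ψ : ℝ → ℂ) (hψ0 : ψ 0 = 1)
    (hψmul : ∀ x ∈ Λ, ∀ y ∈ Λ, ψ (x + y) = ψ x * ψ y)
    (Γ : Finset ℝ) (hΓ : (Γ : Set ℝ) ⊆ Λ) :
    convexHull ℚ {γ : ℝ | γ ∈ Γ ∧ ψ γ = 0} ∩
      (Submodule.span ℚ {γ : ℝ | γ ∈ Γ ∧ ψ γ ≠ 0} : Set ℝ) = ∅ := by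
  let M : AddSubmonoid ℝ :=
    { carrier := Λ, add_mem' := fun hx hy => hΛadd _ hx _ hy, zero_mem' := hΛ0 }
  exact convexHull_rat_inter_span_rat_eq_empty <|
    disjoint_addSubsemigroupClosure_addSubgroupClosure (M := M) (hψ0 ▸ one_ne_zero)
      hψmul (fun _ hγ => hΓ hγ.1) (fun _ hγ => hΓ hγ.1) (fun _ hγ => hγ.2) (fun _ hγ => hγ.2)

theorem stmt11
    (Λ : Set ℝ) (hΛpos : ∀ x ∈ Λ, 0 ≤ x) (hΛ0 : (0:ℝ) ∈ Λ)
    (hΛadd : ∀ x ∈ Λ, ∀ y ∈ Λ, x + y ∈ Λ)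
    (ψ : ℝ → ℂ) (hψ0 : ψ 0 = 1)
    (hψmul : ∀ x ∈ Λ, ∀ y ∈ Λ, ψ (x + y) = ψ x * ψ y)
    (hψbd : ∃ C : ℝ, ∀ x ∈ Λ, ‖ψ x‖ ≤ C)
    (Γ : Finset ℝ) (hΓ : (Γ : Set ℝ) ⊆ Λ) :
    convexHull ℚ {γ : ℝ | γ ∈ Γ ∧ ψ γ = 0} ∩
      (Submodule.span ℚ {γ : ℝ | γ ∈ Γ ∧ ψ γ ≠ 0} : Set ℝ) = ∅ :=
  stmt11_general Λ hΛ0 hΛadd ψ hψ0 hψmul Γ hΓ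
end

section
/- Let P be the set of prime elements of a free multiplicative commutative monoid N ⊆ [1,∞) (so every n ∈ N factors uniquely as a product of elements of P), and let ω be an admissible weight on N. Let G_ω be the set of multiplicative functions a : N → ℂ (a(1)=1, a(mn)=a(m)a(n) for coprime m,n) with Σ_{p∈P} |a(p)|²ω(p)² < ∞ and Σ_{p∈P, k≥2} |a(p^k)|ω(p^k) < ∞. Then G_ω is closed under Dirichlet convolution: if a,b ∈ G_ω then a*b ∈ G_ω, where (a*b)(n) = Σ_{ℓm=n} a(ℓ)b(m). -/
open Filter Finsupp

/-- Multiplicativity for functions on the free commutative monoid `P →₀ ℕ`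
(exponent vectors): value 1 at the identity, and multiplicative on coprime
(= disjointly supported) elements. -/
def IsMultiplicativeOn {P : Type*} (a : (P →₀ ℕ) → ℂ) : Prop :=
  a 0 = 1 ∧ ∀ m n : P →₀ ℕ, Disjoint m.support n.support → a (m + n) = a m * a n

/-- Membership in the class `G_ω`. -/
def MemG {P : Type*} (ω : (P →₀ ℕ) → ℝ) (a : (P →₀ ℕ) → ℂ) : Prop :=
  IsMultiplicativeOn a ∧
  Summable (fun p : P =>
    ‖a (Finsupp.single p 1)‖ ^ 2 * (ω (Finsupp.single p 1)) ^ 2) ∧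
  Summable (fun q : P × {k : ℕ // 2 ≤ k} =>
    ‖a (Finsupp.single q.1 (q.2 : ℕ))‖ * ω (Finsupp.single q.1 (q.2 : ℕ)))

/-!
Write `A i = |a(p^i)| ω(p^i)` and `B j = |b(p^j)| ω(p^j)` for a prime `p`. Submultiplicativity of
`ω` bounds `|(a ⋆ b)(p^k)| ω(p^k)` by the Cauchy product `∑_{i+j=k} A i B j`. For `k = 1` this is
`A 1 + B 1`; in the tail `k ≥ 2` every term has `i ≥ 2` or `j ≥ 2` except `A 1 B 1 ≤ A 1² + B 1²`.
Hence the local mass `A 1² + ∑_{i≥2} A i` of `a ⋆ b` at `p` is at most `6 (X + Y + X Y)`, where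
`X`, `Y` are the local masses of `a` and `b`, and this is summable over `p`.
-/

open Finset.HasAntidiagonal
open scoped ENNReal

theorem ENNReal.mul_le_sq_add_sq (x y : ℝ≥0∞) : x * y ≤ x ^ 2 + y ^ 2 := by
  rcases le_total x y with h | h
  · calc x * y ≤ y * y := by gcongr
      _ ≤ x ^ 2 + y ^ 2 := (sq y).ge.trans le_add_self
  · calc x * y ≤ x * x := by gcongr
      _ ≤ x ^ 2 + y ^ 2 := (sq x).ge.trans le_self_add

theorem ENNReal.add_sq_add_le_six_mul (x y s t : ℝ≥0∞) :
    (x + y) ^ 2 + (t + x * (y + t) + s * (1 + (y + t))) ≤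
      6 * (x ^ 2 + s + (y ^ 2 + t) + (x ^ 2 + s) * (y ^ 2 + t)) := by
  have hxy := ENNReal.mul_le_sq_add_sq x y
  have hx : x ≤ 1 + x ^ 2 := by simpa [add_comm] using ENNReal.mul_le_sq_add_sq x 1
  have hy : y ≤ 1 + y ^ 2 := by simpa [add_comm] using ENNReal.mul_le_sq_add_sq y 1
  set X := x ^ 2 + s
  set Y := y ^ 2 + t
  have hxX : x ^ 2 ≤ X := le_self_add
  have hsX : s ≤ X := le_add_self
  have hyY : y ^ 2 ≤ Y := le_self_add
  have htY : t ≤ Y := le_add_self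
  clear_value X Y
  calc (x + y) ^ 2 + (t + x * (y + t) + s * (1 + (y + t)))
      = x ^ 2 + y ^ 2 + 3 * (x * y) + t + x * t + s * (1 + (y + t)) := by ring
    _ ≤ X + Y + 3 * (X + Y) + Y + (1 + X) * Y + X * (1 + (1 + Y + Y)) := by
        gcongr
        · exact hxy.trans (add_le_add hxX hyY)
        · exact hx.trans (by gcongr)
        · exact hy.trans (by gcongr)
    _ = 6 * X + 6 * Y + 3 * (X * Y) := by ring
    _ ≤ 6 * (X + Y + X * Y) := by rw [mul_add 6, mul_add 6]; gcongr; norm_num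

theorem ENNReal.tsum_mul_le_tsum_mul_tsum {α : Type*} (f g : α → ℝ≥0∞) :
    ∑' i, f i * g i ≤ (∑' i, f i) * ∑' i, g i := by
  rw [← ENNReal.tsum_mul_right]
  exact ENNReal.tsum_le_tsum fun i => by gcongr; exact ENNReal.le_tsum i

theorem ENNReal.tsum_mul_tsum_eq_tsum_sum_antidiagonal {M : Type*} [AddMonoid M]
    [Finset.HasAntidiagonal M] (f g : M → ℝ≥0∞) :
    (∑' i, f i) * ∑' j, g j = ∑' n, ∑ ij ∈ antidiagonal n, f ij.1 * g ij.2 := by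
  rw [← ENNReal.tsum_mul_right]
  simp_rw [← ENNReal.tsum_mul_left]
  rw [← ENNReal.tsum_prod (f := fun i j => f i * g j),
    ← Finset.HasAntidiagonal.sigmaAntidiagonalEquivProd.tsum_eq, ENNReal.tsum_sigma']
  exact tsum_congr fun n => Finset.tsum_subtype (antidiagonal n) (fun ij => f ij.1 * g ij.2)

theorem ENNReal.tsum_sum_antidiagonal_add_two (f g : ℕ → ℝ≥0∞) :
    ∑' k, ∑ ij ∈ antidiagonal (k + 2), f ij.1 * g ij.2 =
      f 0 * ∑' k, g (k + 2) + f 1 * ∑' k, g (k + 1) + (∑' k, f (k + 2)) * ∑' k, g k := by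
  simp_rw [Finset.Nat.sum_antidiagonal_succ]
  rw [ENNReal.tsum_add, ENNReal.tsum_add, ENNReal.tsum_mul_left, ENNReal.tsum_mul_left,
    ENNReal.tsum_mul_tsum_eq_tsum_sum_antidiagonal, add_assoc]

theorem summable_iff_tsum_ofReal_ne_top {α : Type*} {f : α → ℝ} (hf : ∀ i, 0 ≤ f i) :
    Summable f ↔ ∑' i, ENNReal.ofReal (f i) ≠ ∞ :=
  ⟨Summable.tsum_ofReal_ne_top, fun h =>
    (ENNReal.summable_toReal h).congr fun i => ENNReal.toReal_ofReal (hf i)⟩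

theorem tsum_subtype_le_eq_tsum_add {M : Type*} [AddCommMonoid M] [TopologicalSpace M]
    (c : ℕ) (f : ℕ → M) : ∑' k : {k : ℕ // c ≤ k}, f k = ∑' k, f (k + c) :=
  let e : ℕ ≃ {k : ℕ // c ≤ k} :=
    ⟨fun k => ⟨k + c, le_add_self⟩, fun k => k.1 - c, fun k => Nat.add_sub_cancel k c,
      fun k => Subtype.ext (Nat.sub_add_cancel k.2)⟩
  (e.tsum_eq fun k => f k).symm

section WeightedNorm

variable {P : Type*} {ω : (P →₀ ℕ) → ℝ}

noncomputable def weightedNorm (ω : (P →₀ ℕ) → ℝ) (a : (P →₀ ℕ) → ℂ) (n : P →₀ ℕ) : ℝ≥0∞ :=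
  ENNReal.ofReal (‖a n‖ * ω n)

/-- The contribution of the prime `p` to the two series in the definition of `MemG`. -/
noncomputable def localMass (ω : (P →₀ ℕ) → ℝ) (a : (P →₀ ℕ) → ℂ) (p : P) : ℝ≥0∞ :=
  weightedNorm ω a (single p 1) ^ 2 + ∑' k, weightedNorm ω a (single p (k + 2))

theorem memG_iff_tsum_localMass_ne_top (hω : ∀ n, 0 ≤ ω n) (a : (P →₀ ℕ) → ℂ) :
    MemG ω a ↔ IsMultiplicativeOn a ∧ ∑' p, localMass ω a p ≠ ∞ := by
  have hsq (p : P) : weightedNorm ω a (single p 1) ^ 2 =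
      ENNReal.ofReal (‖a (single p 1)‖ ^ 2 * ω (single p 1) ^ 2) := by
    rw [weightedNorm, ← ENNReal.ofReal_pow (mul_nonneg (norm_nonneg _) (hω _)), mul_pow]
  have htail : ∑' p, ∑' k, weightedNorm ω a (single p (k + 2)) =
      ∑' q : P × {k : ℕ // 2 ≤ k}, ENNReal.ofReal (‖a (single q.1 q.2)‖ * ω (single q.1 q.2)) := by
    rw [ENNReal.tsum_prod']
    exact tsum_congr fun p =>
      (tsum_subtype_le_eq_tsum_add 2 fun k => weightedNorm ω a (single p k)).symm
  unfold MemG localMass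
  rw [ENNReal.tsum_add, ENNReal.add_ne_top, tsum_congr hsq, htail,
    summable_iff_tsum_ofReal_ne_top (fun p => by positivity),
    summable_iff_tsum_ofReal_ne_top (fun q => mul_nonneg (norm_nonneg _) (hω _))]

end WeightedNorm

section DirichletConv

variable {P : Type*} [DecidableEq P]

theorem Finsupp.sum_antidiagonal_add_of_disjoint {M : Type*} [AddCommMonoid M]
    {m n : P →₀ ℕ} (hmn : Disjoint m.support n.support) (f : (P →₀ ℕ) × (P →₀ ℕ) → M) :
    ∑ x ∈ antidiagonal (m + n), f x =
      ∑ y ∈ antidiagonal m ×ˢ antidiagonal n, f (y.1.1 + y.2.1, y.1.2 + y.2.2) := by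
  set s := m.support
  have filter_of_le_m {x : P →₀ ℕ} (hx : x ≤ m) :
      x.filter (· ∈ s) = x ∧ x.filter (· ∉ s) = 0 :=
    ⟨(filter_eq_self_iff _ _).2 fun p hp => support_mono hx (mem_support_iff.2 hp),
      (filter_eq_zero_iff _ _).2 fun p hp => notMem_support_iff.1 fun h => hp (support_mono hx h)⟩
  have filter_of_le_n {x : P →₀ ℕ} (hx : x ≤ n) :
      x.filter (· ∈ s) = 0 ∧ x.filter (· ∉ s) = x :=
    ⟨(filter_eq_zero_iff _ _).2 fun p hp => notMem_support_iff.1 fun h =>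
        Finset.disjoint_left.1 hmn hp (support_mono hx h),
      (filter_eq_self_iff _ _).2 fun p hp h =>
        Finset.disjoint_left.1 hmn h (support_mono hx (mem_support_iff.2 hp))⟩
  obtain ⟨hm_in, hm_out⟩ := filter_of_le_m le_rfl
  obtain ⟨hn_in, hn_out⟩ := filter_of_le_n le_rfl
  symm
  refine Finset.sum_nbij' (fun y => (y.1.1 + y.2.1, y.1.2 + y.2.2))
    (fun x => ((x.1.filter (· ∈ s), x.2.filter (· ∈ s)), (x.1.filter (· ∉ s), x.2.filter (· ∉ s))))
    ?_ ?_ ?_ ?_ fun _ _ => rfl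
  · rintro ⟨⟨x₁, y₁⟩, x₂, y₂⟩ h
    simp only [Finset.mem_product, mem_antidiagonal] at h ⊢
    rw [add_add_add_comm, h.1, h.2]
  · rintro ⟨x, y⟩ h
    simp only [Finset.mem_product, mem_antidiagonal] at h ⊢
    rw [← filter_add, ← filter_add, h, filter_add, filter_add, hm_in, hm_out, hn_in, hn_out,
      add_zero, zero_add]
    exact ⟨rfl, rfl⟩
  · rintro ⟨⟨x₁, y₁⟩, x₂, y₂⟩ h
    simp only [Finset.mem_product, mem_antidiagonal] at h
    have hx₁ := filter_of_le_m (h.1 ▸ le_self_add)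
    have hy₁ := filter_of_le_m (h.1 ▸ le_add_self)
    have hx₂ := filter_of_le_n (h.2 ▸ le_self_add)
    have hy₂ := filter_of_le_n (h.2 ▸ le_add_self)
    simp only [filter_add, hx₁, hy₁, hx₂, hy₂, add_zero, zero_add]
  · rintro ⟨x, y⟩ -
    simp only [filter_add_filter_not]

noncomputable def dirichletConv (a b : (P →₀ ℕ) → ℂ) (n : P →₀ ℕ) : ℂ :=
  ∑ x ∈ antidiagonal n, a x.1 * b x.2

theorem IsMultiplicativeOn.dirichletConv {a b : (P →₀ ℕ) → ℂ} (ha : IsMultiplicativeOn a)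
    (hb : IsMultiplicativeOn b) : IsMultiplicativeOn (dirichletConv a b) := by
  refine ⟨by simp [_root_.dirichletConv, ha.1, hb.1], fun m n hmn => ?_⟩
  simp only [_root_.dirichletConv]
  rw [sum_antidiagonal_add_of_disjoint hmn, Finset.sum_mul_sum, ← Finset.sum_product']
  refine Finset.sum_congr rfl fun ⟨⟨x₁, y₁⟩, x₂, y₂⟩ h => ?_
  simp only [Finset.mem_product, mem_antidiagonal] at h
  have disjoint_of_le {u v : P →₀ ℕ} (hu : u ≤ m) (hv : v ≤ n) : Disjoint u.support v.support :=
    hmn.mono (support_mono hu) (support_mono hv)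
  rw [ha.2 _ _ (disjoint_of_le (h.1 ▸ le_self_add) (h.2 ▸ le_self_add)),
    hb.2 _ _ (disjoint_of_le (h.1 ▸ le_add_self) (h.2 ▸ le_add_self))]
  ring

variable {ω : (P →₀ ℕ) → ℝ}

theorem weightedNorm_dirichletConv_le (hω : ∀ n, 0 ≤ ω n)
    (hωsub : ∀ m n : P →₀ ℕ, ω (m + n) ≤ ω m * ω n) (a b : (P →₀ ℕ) → ℂ) (n : P →₀ ℕ) :
    weightedNorm ω (dirichletConv a b) n ≤
      ∑ x ∈ antidiagonal n, weightedNorm ω a x.1 * weightedNorm ω b x.2 := by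
  have hterm (x : (P →₀ ℕ) × (P →₀ ℕ)) (hx : x ∈ antidiagonal n) :
      ‖a x.1 * b x.2‖ * ω n ≤ ‖a x.1‖ * ω x.1 * (‖b x.2‖ * ω x.2) := by
    rw [mem_antidiagonal] at hx
    calc ‖a x.1 * b x.2‖ * ω n ≤ ‖a x.1‖ * ‖b x.2‖ * (ω x.1 * ω x.2) := by
          rw [norm_mul, ← hx]; gcongr; exact hωsub _ _
      _ = ‖a x.1‖ * ω x.1 * (‖b x.2‖ * ω x.2) := by ring
  calc weightedNorm ω (dirichletConv a b) n
      ≤ ENNReal.ofReal (∑ x ∈ antidiagonal n, ‖a x.1‖ * ω x.1 * (‖b x.2‖ * ω x.2)) := by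
        refine ENNReal.ofReal_le_ofReal ?_
        calc ‖dirichletConv a b n‖ * ω n ≤ (∑ x ∈ antidiagonal n, ‖a x.1 * b x.2‖) * ω n := by
              gcongr; exacts [hω n, norm_sum_le _ _]
          _ ≤ _ := by rw [Finset.sum_mul]; exact Finset.sum_le_sum hterm
    _ = ∑ x ∈ antidiagonal n, weightedNorm ω a x.1 * weightedNorm ω b x.2 := by
        rw [ENNReal.ofReal_sum_of_nonneg fun x _ => by have := hω x.1; have := hω x.2; positivity]
        exact Finset.sum_congr rfl fun x _ =>
          ENNReal.ofReal_mul (mul_nonneg (norm_nonneg _) (hω _))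

theorem localMass_dirichletConv_le (hω0 : ω 0 = 1) (hω : ∀ n, 0 ≤ ω n)
    (hωsub : ∀ m n : P →₀ ℕ, ω (m + n) ≤ ω m * ω n) {a b : (P →₀ ℕ) → ℂ} (ha : a 0 = 1)
    (hb : b 0 = 1) (p : P) :
    localMass ω (dirichletConv a b) p ≤
      6 * (localMass ω a p + localMass ω b p + localMass ω a p * localMass ω b p) := by
  set A := fun i => weightedNorm ω a (single p i)
  set B := fun i => weightedNorm ω b (single p i)
  have hA0 : A 0 = 1 := by simp [A, weightedNorm, ha, hω0]
  have hB0 : B 0 = 1 := by simp [B, weightedNorm, hb, hω0]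
  have hconv (k : ℕ) : weightedNorm ω (dirichletConv a b) (single p k) ≤
      ∑ ij ∈ antidiagonal k, A ij.1 * B ij.2 := by
    simpa [antidiagonal_single, Finset.sum_map] using
      weightedNorm_dirichletConv_le hω hωsub a b (single p k)
  have hone : weightedNorm ω (dirichletConv a b) (single p 1) ≤ A 1 + B 1 := by
    simpa [Finset.Nat.sum_antidiagonal_succ, hA0, hB0, add_comm] using hconv 1
  have htail : ∑' k, weightedNorm ω (dirichletConv a b) (single p (k + 2)) ≤
      ∑' k, B (k + 2) + A 1 * (B 1 + ∑' k, B (k + 2)) +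
        (∑' k, A (k + 2)) * (1 + (B 1 + ∑' k, B (k + 2))) := by
    have hB : ∑' k, B k = 1 + ∑' k, B (k + 1) := by
      rw [tsum_eq_zero_add' ENNReal.summable, hB0]
    have hB1 : ∑' k, B (k + 1) = B 1 + ∑' k, B (k + 2) := tsum_eq_zero_add' ENNReal.summable
    calc _ ≤ ∑' k, ∑ ij ∈ antidiagonal (k + 2), A ij.1 * B ij.2 :=
          ENNReal.tsum_le_tsum fun k => hconv (k + 2)
      _ = _ := by rw [ENNReal.tsum_sum_antidiagonal_add_two, hB, hB1, hA0, one_mul]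
  calc localMass ω (dirichletConv a b) p
      ≤ (A 1 + B 1) ^ 2 + (∑' k, B (k + 2) + A 1 * (B 1 + ∑' k, B (k + 2)) +
        (∑' k, A (k + 2)) * (1 + (B 1 + ∑' k, B (k + 2)))) := by unfold localMass; gcongr
    _ ≤ _ := ENNReal.add_sq_add_le_six_mul _ _ _ _

end DirichletConv

theorem stmt19_general
    (P : Type*) [DecidableEq P]
    (ω : (P →₀ ℕ) → ℝ) (hω0 : ω 0 = 1)
    (hωsub : ∀ m n : P →₀ ℕ, ω (m + n) ≤ ω m * ω n)
    (hω1 : ∀ n : P →₀ ℕ, 1 ≤ ω n)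
    (a b : (P →₀ ℕ) → ℂ) (hA : MemG ω a) (hB : MemG ω b) :
    MemG ω (fun n : P →₀ ℕ => ∑ p ∈ Finset.HasAntidiagonal.antidiagonal n, a p.1 * b p.2) := by
  have hω (n : P →₀ ℕ) : 0 ≤ ω n := zero_le_one.trans (hω1 n)
  change MemG ω (dirichletConv a b)
  rw [memG_iff_tsum_localMass_ne_top hω] at hA hB ⊢
  refine ⟨hA.1.dirichletConv hB.1, ne_top_of_le_ne_top ?_
    (ENNReal.tsum_le_tsum (localMass_dirichletConv_le hω0 hω hωsub hA.1.1 hB.1.1))⟩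
  rw [ENNReal.tsum_mul_left, ENNReal.tsum_add, ENNReal.tsum_add]
  have hprod := ne_top_of_le_ne_top (ENNReal.mul_ne_top hA.2 hB.2)
    (ENNReal.tsum_mul_le_tsum_mul_tsum (localMass ω a) (localMass ω b))
  exact ENNReal.mul_ne_top ENNReal.ofNat_ne_top
    (ENNReal.add_ne_top.2 ⟨ENNReal.add_ne_top.2 ⟨hA.2, hB.2⟩, hprod⟩)

theorem stmt19
    (P : Type*) [DecidableEq P]
    (ω : (P →₀ ℕ) → ℝ) (hω0 : ω 0 = 1)
    (hωsub : ∀ m n : P →₀ ℕ, ω (m + n) ≤ ω m * ω n)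
    (hω1 : ∀ n : P →₀ ℕ, 1 ≤ ω n)
    (hωadm : ∀ n : P →₀ ℕ,
      Tendsto (fun k : ℕ => (ω (k • n)) ^ (1 / (k : ℝ))) atTop (nhds 1))
    (a b : (P →₀ ℕ) → ℂ) (hA : MemG ω a) (hB : MemG ω b) :
    MemG ω (fun n : P →₀ ℕ => ∑ p ∈ Finset.HasAntidiagonal.antidiagonal n, a p.1 * b p.2) :=
  stmt19_general P ω hω0 hωsub hω1 a b hA hB
end
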